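/- arXiv:1803.04259 — 4 statements merged into one kernel-verified Lean document; each statement's English description precedes it below -/
import Mathlib

section
/- For integers $M \geq 1$, $d_1 \geq 1$, and $d_j > 2Md_1$, the ratio $\binom{Md_j}{Md_1}/\binom{d_j}{Md_1}$ is at most $M^{Md_1} \cdot 2^{Md_1 - 1}$. -/
/-- For integers `M ≥ 1`, `d₁ ≥ 1` and `dⱼ > 2·M·d₁`, the ratio
`C(M·dⱼ, M·d₁) / C(dⱼ, M·d₁)` is at most `M^(M·d₁) · 2^(M·d₁ - 1)`. -/
theorem binom_ratio_bound (M d1 dj : ℕ) (hM : 1 ≤ M) (hd1 : 1 ≤ d1)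
    (hdj : 2 * M * d1 < dj) :
    ((M * dj).choose (M * d1) : ℚ) / ((dj.choose (M * d1) : ℚ)) ≤
      (M : ℚ) ^ (M * d1) * 2 ^ (M * d1 - 1) := by
  set k := M * d1 with hk
  clear_value k
  have hkpos : 0 < k := hk ▸ Nat.mul_pos hM hd1
  have h2k : 2 * k < dj := by rw [hk, ← mul_assoc]; exact hdj
  have hkdj : k ≤ dj := by omega
  -- descFactorial inequality in ℕ
  have hdesc : (M * dj).descFactorial k ≤ M ^ k * 2 ^ (k - 1) * dj.descFactorial k := by
    obtain ⟨m, hm⟩ : ∃ m, k = m + 1 := ⟨k - 1, by omega⟩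
    rw [Nat.descFactorial_eq_prod_range, Nat.descFactorial_eq_prod_range]
    calc ∏ i ∈ Finset.range k, (M * dj - i)
        ≤ ∏ i ∈ Finset.range k, ((if i = 0 then M else 2 * M) * (dj - i)) := by
          apply Finset.prod_le_prod (fun _ _ => Nat.zero_le _)
          intro i hi
          rw [Finset.mem_range] at hi
          by_cases h0 : i = 0
          · simp [h0]
          · simp only [h0, if_false]
            calc M * dj - i ≤ M * dj := Nat.sub_le _ _
              _ ≤ M * (2 * (dj - i)) := Nat.mul_le_mul le_rfl (by omega)
              _ = 2 * M * (dj - i) := by ring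
      _ = (∏ i ∈ Finset.range k, (if i = 0 then M else 2 * M)) *
            ∏ i ∈ Finset.range k, (dj - i) := Finset.prod_mul_distrib
      _ = M ^ k * 2 ^ (k - 1) * ∏ i ∈ Finset.range k, (dj - i) := by
          congr 1
          subst hm
          rw [Finset.prod_range_succ']
          simp only [Nat.succ_ne_zero, if_false, if_true, eq_self_iff_true,
            Finset.prod_const, Finset.card_range, Nat.add_sub_cancel_left, Nat.add_sub_cancel]
          ring
  have hnat : (M * dj).choose k ≤ M ^ k * 2 ^ (k - 1) * dj.choose k := by
    rw [Nat.descFactorial_eq_factorial_mul_choose, Nat.descFactorial_eq_factorial_mul_choose]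
      at hdesc
    rw [mul_left_comm] at hdesc
    exact Nat.le_of_mul_le_mul_left hdesc (Nat.factorial_pos k)
  have hc : 0 < (dj.choose k : ℚ) := by
    exact_mod_cast Nat.choose_pos hkdj
  rw [div_le_iff₀ hc]
  exact_mod_cast hnat
end

section
/- Fix $M \geq 1$ and $n \geq 1$. The set of reading lists $(S^1, \dots, S^n)$ with each $S^i$ a $d$-element subset of $[Md]$ (for varying $d$), partially ordered by: $S \leq T$ iff there is a strictly increasing injection $f : \mathbb{N} \to \mathbb{N}$ with $f(S^i) \subseteq T^i$ for all $i \in [n]$, contains no infinite antichain. -/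
/-- A reading list with a fixed number `n` of entries: a tuple `(S¹, …, Sⁿ)` where each
`Sⁱ` is a `d`-element subset of `[M·d] = {1, …, M·d}` (for some `d`). -/
structure ReadingListN (M n : ℕ) where
  d : ℕ
  S : Fin n → Finset ℕ
  subset_range : ∀ i, S i ⊆ Finset.Icc 1 (M * d)
  card_eq : ∀ i, (S i).card = d

/-- `A ≤ B` iff there is a strictly increasing injection `f : ℕ → ℕ` with
`f(Aⁱ) ⊆ Bⁱ` for every `i ∈ [n]`. -/
def ReadingListN.le {M n : ℕ} (A B : ReadingListN M n) : Prop :=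
  ∃ f : ℕ → ℕ, StrictMono f ∧ ∀ i, (A.S i).image f ⊆ B.S i

/-!
A family `S : ι → Finset ℕ` of subsets of `{0, …, N - 1}` is encoded by the word of length `N`
over the alphabet `Finset ι` whose `k`-th letter is `{i | k ∈ Sⁱ}`. An embedding of one such
word into another, letterwise `⊆` along a subsequence, yields a strictly increasing `f` with
`f(Sⁱ) ⊆ Tⁱ`. Since `Finset (Fin n)` is finite, Higman's lemma says that in any
infinite sequence of words one embeds into a later one.
-/

theorem List.SublistForall₂.exists_orderEmbedding {α β : Type*} {R : α → β → Prop}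
    {l₁ : List α} {l₂ : List β} (h : SublistForall₂ R l₁ l₂) :
    ∃ f : ℕ ↪o ℕ, ∀ k (hk : k < l₁.length), ∃ hk' : f k < l₂.length, R l₁[k] l₂[f k] := by
  obtain ⟨l, hR, hsub⟩ := sublistForall₂_iff.1 h
  obtain ⟨f, hf⟩ := sublist_iff_exists_orderEmbedding_getElem?_eq.1 hsub
  refine ⟨f, fun k hk => ?_⟩
  have hkl : k < l.length := hR.length_eq ▸ hk
  have hget : l₂[f k]? = some l[k] := (hf k).symm.trans (getElem?_eq_getElem hkl)
  obtain ⟨hk', hlk⟩ := getElem?_eq_some_iff.1 hget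
  exact ⟨hk', hlk ▸ hR.get hk hkl⟩

section MembershipWord

variable {ι : Type*} [Fintype ι]

def membershipWord (S : ι → Finset ℕ) (N : ℕ) : List (Finset ι) :=
  (List.range N).map fun k => Finset.univ.filter (k ∈ S ·)

@[simp]
theorem length_membershipWord (S : ι → Finset ℕ) (N : ℕ) :
    (membershipWord S N).length = N := by
  simp [membershipWord]

theorem mem_membershipWord_getElem {S : ι → Finset ℕ} {N k : ℕ}
    (hk : k < (membershipWord S N).length) {i : ι} :
    i ∈ (membershipWord S N)[k] ↔ k ∈ S i := by
  simp [membershipWord]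

theorem exists_strictMono_image_subset_of_sublistForall₂ {S T : ι → Finset ℕ} {N N' : ℕ}
    (hS : ∀ i, S i ⊆ Finset.range N)
    (h : List.SublistForall₂ (· ≤ ·) (membershipWord S N) (membershipWord T N')) :
    ∃ f : ℕ → ℕ, StrictMono f ∧ ∀ i, (S i).image f ⊆ T i := by
  obtain ⟨f, hf⟩ := h.exists_orderEmbedding
  refine ⟨f, f.strictMono, fun i => Finset.image_subset_iff.2 fun k hk => ?_⟩
  have hkN : k < (membershipWord S N).length := by simpa using hS i hk
  obtain ⟨hk', hle⟩ := hf k hkN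
  exact (mem_membershipWord_getElem hk').1 (hle ((mem_membershipWord_getElem hkN).2 hk))

end MembershipWord

namespace ReadingListN

variable {M n : ℕ}

def word (A : ReadingListN M n) : List (Finset (Fin n)) :=
  membershipWord A.S (M * A.d + 1)

theorem S_subset_range (A : ReadingListN M n) (i : Fin n) :
    A.S i ⊆ Finset.range (M * A.d + 1) := fun k hk => by
  simpa [Nat.lt_succ_iff] using (Finset.mem_Icc.1 (A.subset_range i hk)).2

theorem le_of_sublistForall₂_word {A B : ReadingListN M n}
    (h : List.SublistForall₂ (· ≤ ·) A.word B.word) : A.le B :=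
  exists_strictMono_image_subset_of_sublistForall₂ A.S_subset_range h

end ReadingListN

theorem readingListN_no_infinite_antichain_general (M n : ℕ) :
    ¬ ∃ g : ℕ → ReadingListN M n, ∀ i j : ℕ, i < j →
      ¬ (g i).le (g j) ∧ ¬ (g j).le (g i) := by
  rintro ⟨g, hg⟩
  have higman := (Set.finite_univ (α := Finset (Fin n))).isPWO
    |>.partiallyWellOrderedOn_sublistForall₂ (· ≤ ·)
  obtain ⟨i, j, hij, hle⟩ := higman.exists_lt (f := fun k => (g k).word) (fun _ _ _ => trivial)
  exact (hg i j hij).1 (ReadingListN.le_of_sublistForall₂_word hle)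

/-- For fixed `M` and `n`, the poset of reading lists with `n` entries (and varying `d`)
contains no infinite antichain. -/
theorem readingListN_no_infinite_antichain (M n : ℕ) (hM : 1 ≤ M) (hn : 1 ≤ n) :
    ¬ ∃ g : ℕ → ReadingListN M n, ∀ i j : ℕ, i < j →
      ¬ (g i).le (g j) ∧ ¬ (g j).le (g i) :=
  readingListN_no_infinite_antichain_general M n
end

section
/- Fix $M \geq 1$. The poset of all reading lists — tuples $(S^1,\dots,S^n)$ of $d$-element subsets of $[Md]$ for all $d, n \geq 0$ — ordered by $S_{(d,n)} \leq T_{(e,m)}$ iff there exist indices $k_1 < \dots < k_n$ in $[m]$ and a strictly increasing injection $f: \mathbb{N} \to \mathbb{N}$ with $f(S^i) \subseteq T^{k_i}$ for all $i$, is noetherian: it contains no infinite antichain and no infinite strictly decreasing sequence. -/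
/-!
Given a sequence of reading lists `g`, compare everything with `A = g 0`. If some later list `B`
has `d` and `n` both large compared with `A`, then `A ≤ B` by a greedy argument: averaging over
the `n` rows of `B` finds an element lying in at least a `1/(2M)` fraction of them, and
repeating this `M·d(A)` times gives a set of `M·d(A)` elements common to `n(B)/(2M)^(M·d(A))`
rows, into which all of `A` embeds. Otherwise every later list has bounded `d` or one of
finitely many values of `n`. For bounded `d`, a reading list is a word over the finite set of
subsets of `[M·D]`; for fixed `n`, it is the word of its columns, subsets of `[n]`. In both
cases Higman's lemma provides the comparable pair.
-/

/-- A reading list of type `(d, n)` with parameter `M`: a tuple `(S¹, …, Sⁿ)` where each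
`Sⁱ` is a `d`-element subset of `[M·d] = {1, …, M·d}`. -/
structure ReadingList (M : ℕ) where
  d : ℕ
  n : ℕ
  S : Fin n → Finset ℕ
  subset_range : ∀ i, S i ⊆ Finset.Icc 1 (M * d)
  card_eq : ∀ i, (S i).card = d

/-- The reading list order: `A ≤ B` iff there is a strictly increasing injection `f` on
indices and strictly increasing indices `k₁ < ⋯ < kₙ` with `f(Aⁱ) ⊆ B^{kᵢ}` for all `i`. -/
def ReadingList.le {M : ℕ} (A B : ReadingList M) : Prop :=
  ∃ (f : ℕ → ℕ) (k : Fin A.n → Fin B.n), StrictMono f ∧ StrictMono k ∧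
    ∀ i, (A.S i).image f ⊆ B.S (k i)

open Finset

theorem List.SublistForall₂.exists_strictMono_ofFn {α : Type*} {r : α → α → Prop} {m n : ℕ}
    {F : Fin m → α} {G : Fin n → α} (h : List.SublistForall₂ r (List.ofFn F) (List.ofFn G)) :
    ∃ ψ : Fin m → Fin n, StrictMono ψ ∧ ∀ v, r (F v) (G (ψ v)) := by
  obtain ⟨l, hFl, hl⟩ := List.sublistForall₂_iff.mp h
  obtain ⟨e, he⟩ := List.sublist_iff_exists_fin_orderEmbedding_get_eq.mp hl
  have hlen : m = l.length := by simpa using hFl.length_eq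
  refine ⟨fun v => Fin.cast List.length_ofFn (e (Fin.cast hlen v)),
    fun a b hab => e.strictMono hab, fun v => ?_⟩
  have hrel := (List.forall₂_iff_get.mp hFl).2 v (by simp) (by omega)
  have hget := he (Fin.cast hlen v)
  simp only [List.get_eq_getElem, List.getElem_ofFn, Fin.val_cast] at hrel hget
  exact hget ▸ hrel

/-- Higman's lemma for families of finite tuples. -/
theorem Set.PartiallyWellOrderedOn.exists_lt_strictMono_rel {α : Type*} {r : α → α → Prop}
    [IsPreorder α r] {s : Set α} (hs : s.PartiallyWellOrderedOn r) {len : ℕ → ℕ}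
    (F : ∀ t, Fin (len t) → α) (hF : ∀ t v, F t v ∈ s) :
    ∃ i j, i < j ∧ ∃ ψ : Fin (len i) → Fin (len j), StrictMono ψ ∧ ∀ v, r (F i v) (F j (ψ v)) := by
  obtain ⟨i, j, hij, h⟩ := (partiallyWellOrderedOn_sublistForall₂ r hs).exists_lt
    (f := fun t => List.ofFn (F t)) (by simpa [List.mem_ofFn] using hF)
  exact ⟨i, j, hij, h.exists_strictMono_ofFn⟩

theorem StrictMono.exists_extend_nat {m : ℕ} {φ : Fin m → ℕ} (hφ : StrictMono φ) :
    ∃ f : ℕ → ℕ, StrictMono f ∧ ∀ v : Fin m, f v = φ v := by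
  refine ⟨fun x => if h : x < m then φ ⟨x, h⟩ else univ.sup φ + x,
    strictMono_nat_of_lt_succ fun x => ?_, fun v => by simp⟩
  by_cases hx : x + 1 < m
  · simpa [hx, show x < m by omega] using hφ (show (⟨x, by omega⟩ : Fin m) < ⟨x + 1, hx⟩ by simp)
  · by_cases hx' : x < m
    · simp only [hx, hx', dite_true, dite_false]
      have := le_sup (f := φ) (mem_univ ⟨x, hx'⟩)
      omega
    · simp [hx, hx']

section CommonSubset

variable {ι α : Type*} [DecidableEq α] {S : ι → Finset α} {T : Finset α} {d M : ℕ}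

theorem Finset.exists_mem_sdiff_card_le_mul_card_filter [Nonempty ι] (hS : ∀ i, S i ⊆ T)
    (hcard : ∀ i, #(S i) = d) (hT : #T ≤ M * d) {C : Finset α} {R : Finset ι}
    (hCR : ∀ r ∈ R, C ⊆ S r) (hC : 2 * #C < d) :
    ∃ x ∈ T \ C, #R ≤ 2 * M * #{r ∈ R | x ∈ S r} := by
  obtain ⟨r₀⟩ : Nonempty ι := inferInstance
  have hne : (T \ C).Nonempty := by
    obtain ⟨x, hx, hxC⟩ :=
      exists_mem_notMem_of_card_lt_card (s := C) (t := S r₀) (by rw [hcard]; omega)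
    exact ⟨x, mem_sdiff.2 ⟨hS r₀ hx, hxC⟩⟩
  obtain ⟨x, hx, hmax⟩ := (T \ C).exists_max_image (fun x => #{r ∈ R | x ∈ S r}) hne
  refine ⟨x, hx, ?_⟩
  -- Double counting: each `S r` with `r ∈ R` meets `T \ C` in `d - #C ≥ d / 2` elements.
  have hcount : #R * (d - #C) ≤ #(T \ C) * #{r ∈ R | x ∈ S r} :=
    card_mul_le_card_mul (fun r y => y ∈ S r)
      (fun r hr => calc
        d - #C = #(S r \ C) := by rw [card_sdiff_of_subset (hCR r hr), hcard]
        _ ≤ _ := card_le_card fun y hy => by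
          simp only [bipartiteAbove, mem_filter, mem_sdiff] at hy ⊢
          exact ⟨⟨hS r hy.1, hy.2⟩, hy.1⟩)
      hmax
  have hTC_card : #(T \ C) ≤ M * d := (card_le_card sdiff_subset).trans hT
  have hmul : #R * d ≤ 2 * M * #{r ∈ R | x ∈ S r} * d := by
    calc #R * d ≤ #R * (2 * (d - #C)) := Nat.mul_le_mul_left _ (by omega)
      _ = 2 * (#R * (d - #C)) := by ring
      _ ≤ 2 * (#(T \ C) * #{r ∈ R | x ∈ S r}) := by omega
      _ ≤ 2 * (M * d * #{r ∈ R | x ∈ S r}) := by gcongr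
      _ = 2 * M * #{r ∈ R | x ∈ S r} * d := by ring
  exact Nat.le_of_mul_le_mul_right hmul (by omega)

theorem Finset.exists_card_eq_forall_subset [Fintype ι] [Nonempty ι] (hS : ∀ i, S i ⊆ T)
    (hcard : ∀ i, #(S i) = d) (hT : #T ≤ M * d) (c : ℕ) (hc : 2 * c ≤ d) :
    ∃ C : Finset α, #C = c ∧ ∃ R : Finset ι, Fintype.card ι ≤ (2 * M) ^ c * #R ∧
      ∀ r ∈ R, C ⊆ S r := by
  induction c with
  | zero => exact ⟨∅, rfl, univ, by simp, by simp⟩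
  | succ c ih =>
    obtain ⟨C, hC, R, hRcard, hCR⟩ := ih (by omega)
    obtain ⟨x, hx, hxR⟩ :=
      exists_mem_sdiff_card_le_mul_card_filter hS hcard hT hCR (by omega)
    refine ⟨insert x C, by rw [card_insert_of_notMem (mem_sdiff.1 hx).2, hC],
      {r ∈ R | x ∈ S r}, ?_, fun r hr => ?_⟩
    · calc Fintype.card ι ≤ (2 * M) ^ c * #R := hRcard
        _ ≤ (2 * M) ^ c * (2 * M * #{r ∈ R | x ∈ S r}) := by gcongr
        _ = (2 * M) ^ (c + 1) * #{r ∈ R | x ∈ S r} := by ring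
    · obtain ⟨hr, hxr⟩ := mem_filter.1 hr
      exact insert_subset hxr (hCR r hr)

end CommonSubset

namespace ReadingList

variable {M : ℕ}

theorem le_trans {A B C : ReadingList M} (hAB : A.le B) (hBC : B.le C) : A.le C := by
  obtain ⟨f, k, hf, hk, hfk⟩ := hAB
  obtain ⟨g, l, hg, hl, hgl⟩ := hBC
  refine ⟨g ∘ f, l ∘ k, hg.comp hf, hl.comp hk, fun i => ?_⟩
  rw [← image_image]
  exact (image_subset_image (hfk i)).trans (hgl (k i))

instance : IsPreorder (ReadingList M) ReadingList.le where
  refl _ := ⟨id, id, strictMono_id, strictMono_id, fun _ => image_id.subset⟩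
  trans _ _ _ := le_trans

/-- Elements of reading lists are positive, so `ψ v` prescribes the image of `v + 1`. -/
theorem le_of_forall_mem {A B : ReadingList M} (ψ : Fin (M * A.d) → ℕ) (hψ : StrictMono ψ)
    (hψ_pos : ∀ v, 0 < ψ v) (k : Fin A.n → Fin B.n) (hk : StrictMono k)
    (h : ∀ i (v : Fin (M * A.d)), (v : ℕ) + 1 ∈ A.S i → ψ v ∈ B.S (k i)) : A.le B := by
  obtain ⟨f, hf, hfψ⟩ := (Fin.strictMono_cons.2 ⟨hψ_pos, hψ⟩).exists_extend_nat
  refine ⟨f, k, hf, hk, fun i => image_subset_iff.2 fun x hx => ?_⟩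
  obtain ⟨hx₁, hx₂⟩ := mem_Icc.1 (A.subset_range i hx)
  obtain ⟨v, rfl⟩ : ∃ v : Fin (M * A.d), (v : ℕ) + 1 = x := ⟨⟨x - 1, by omega⟩, by simp; omega⟩
  simpa [← Fin.val_succ, hfψ] using h i v hx

theorem le_of_large {A B : ReadingList M} (hd : 2 * (M * A.d) ≤ B.d)
    (hn : (2 * M) ^ (M * A.d) * A.n ≤ B.n) : A.le B := by
  rcases Nat.eq_zero_or_pos A.n with hA | hA
  · have : IsEmpty (Fin A.n) := by rw [hA]; infer_instance
    exact ⟨id, isEmptyElim, strictMono_id, fun i => isEmptyElim i, isEmptyElim⟩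
  have hpow : 0 < (2 * M) ^ (M * A.d) := by
    rcases Nat.eq_zero_or_pos M with rfl | hM
    · simp
    · positivity
  have : Nonempty (Fin B.n) := ⟨⟨0, by nlinarith⟩⟩
  obtain ⟨C, hC, R, hR, hCR⟩ := exists_card_eq_forall_subset B.subset_range B.card_eq
    (M := M) (by simp) (M * A.d) hd
  rw [Fintype.card_fin] at hR
  obtain ⟨K, hKR, hK⟩ := exists_subset_card_eq (s := R) (n := A.n)
    (Nat.le_of_mul_le_mul_left (hn.trans hR) hpow)
  obtain ⟨r₀, hr₀⟩ := (card_pos.1 (hK ▸ hA)).mono hKR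
  refine le_of_forall_mem (C.orderEmbOfFin hC) (C.orderEmbOfFin hC).strictMono
    (fun v => (mem_Icc.1 (B.subset_range r₀ (hCR r₀ hr₀ (C.orderEmbOfFin_mem hC v)))).1)
    (K.orderEmbOfFin hK) (K.orderEmbOfFin hK).strictMono fun i v _ => ?_
  exact hCR _ (hKR (K.orderEmbOfFin_mem hK i)) (C.orderEmbOfFin_mem hC v)

theorem partiallyWellOrderedOn_d_le (D : ℕ) :
    {A : ReadingList M | A.d ≤ D}.PartiallyWellOrderedOn ReadingList.le := by
  refine Set.partiallyWellOrderedOn_iff_exists_lt.2 fun g hg => ?_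
  have hrows : (↑(Icc 1 (M * D)).powerset : Set (Finset ℕ)).PartiallyWellOrderedOn (· ⊆ ·) :=
    Finset.partiallyWellOrderedOn _
  obtain ⟨i, j, hij, k, hk, hS⟩ := hrows.exists_lt_strictMono_rel (fun t => (g t).S)
    fun t a => mem_powerset.2 ((g t).subset_range a |>.trans
      (Icc_subset_Icc_right (Nat.mul_le_mul_left M (hg t))))
  exact ⟨i, j, hij, id, k, strictMono_id, hk, fun a => by rw [image_id]; exact hS a⟩

/-- Row indices are taken in `ℕ` so that columns of different reading lists can be compared. -/
def column (A : ReadingList M) (x : ℕ) : Finset ℕ :=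
  ({a | x ∈ A.S a} : Finset (Fin A.n)).map Fin.valEmbedding

theorem column_subset_range (A : ReadingList M) (x : ℕ) : A.column x ⊆ range A.n := by
  intro a
  simp only [column, mem_map, mem_range]
  rintro ⟨a, -, rfl⟩
  exact a.2

theorem val_mem_column {A : ReadingList M} {a : Fin A.n} {x : ℕ} :
    (a : ℕ) ∈ A.column x ↔ x ∈ A.S a := by
  simp [column, Fin.val_inj]

theorem partiallyWellOrderedOn_n_eq (n₀ : ℕ) :
    {A : ReadingList M | A.n = n₀}.PartiallyWellOrderedOn ReadingList.le := by
  refine Set.partiallyWellOrderedOn_iff_exists_lt.2 fun g hg => ?_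
  have hcols : (↑(range n₀).powerset : Set (Finset ℕ)).PartiallyWellOrderedOn (· ⊆ ·) :=
    Finset.partiallyWellOrderedOn _
  obtain ⟨i, j, hij, ψ, hψ, hcol⟩ := hcols.exists_lt_strictMono_rel
    (fun t (v : Fin (M * (g t).d)) => (g t).column (v + 1))
    fun t v => mem_powerset.2 (hg t ▸ column_subset_range _ _)
  have hn : (g i).n = (g j).n := (hg i).trans (hg j).symm
  refine ⟨i, j, hij, le_of_forall_mem (fun v => ψ v + 1) (fun _ _ h => by simpa using hψ h)
    (fun _ => Nat.succ_pos _) (Fin.cast hn) (fun _ _ h => h) fun a v hv => ?_⟩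
  exact val_mem_column.1 (hcol v (val_mem_column.2 hv))

theorem wellQuasiOrdered_le : WellQuasiOrdered (@ReadingList.le M) := by
  intro g
  set D := 2 * (M * (g 0).d)
  set N := (2 * M) ^ (M * (g 0).d) * (g 0).n
  by_cases hlarge : ∃ t, D ≤ (g (t + 1)).d ∧ N ≤ (g (t + 1)).n
  · obtain ⟨t, hd, hn⟩ := hlarge
    exact ⟨0, t + 1, t.succ_pos, le_of_large hd hn⟩
  push Not at hlarge
  have hsmall : Set.PartiallyWellOrderedOn
      ({A | A.d ≤ D} ∪ ⋃ n₀ ∈ range N, {A : ReadingList M | A.n = n₀}) ReadingList.le :=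
    (partiallyWellOrderedOn_d_le D).union
      ((range N).partiallyWellOrderedOn_bUnion.2 fun n₀ _ => partiallyWellOrderedOn_n_eq n₀)
  obtain ⟨i, j, hij, hle⟩ := hsmall.exists_lt (f := fun t => g (t + 1)) fun t => by
    by_cases hd : D ≤ (g (t + 1)).d
    · exact Or.inr (Set.mem_biUnion (mem_range.2 (hlarge t hd)) rfl)
    · exact Or.inl (Nat.le_of_not_le hd)
  exact ⟨i + 1, j + 1, by omega, hle⟩

end ReadingList

theorem readingList_noetherian_general (M : ℕ) :
    (¬ ∃ g : ℕ → ReadingList M, ∀ i j : ℕ, i < j →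
        ¬ (g i).le (g j) ∧ ¬ (g j).le (g i)) ∧
    (¬ ∃ g : ℕ → ReadingList M, ∀ i : ℕ,
        (g (i + 1)).le (g i) ∧ ¬ (g i).le (g (i + 1))) := by
  refine ⟨fun ⟨g, hg⟩ => ?_, fun ⟨g, hg⟩ => ?_⟩
  · obtain ⟨i, j, hij, hle⟩ := ReadingList.wellQuasiOrdered_le g
    exact (hg i j hij).1 hle
  · exact (wellFounded_iff_isEmpty_descending_chain.1
      ReadingList.wellQuasiOrdered_le.wellFounded).false ⟨g, hg⟩

/-- The poset of all reading lists is noetherian: it has no infinite antichain and no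
infinite strictly decreasing sequence. -/
theorem readingList_noetherian (M : ℕ) (hM : 1 ≤ M) :
    (¬ ∃ g : ℕ → ReadingList M, ∀ i j : ℕ, i < j →
        ¬ (g i).le (g j) ∧ ¬ (g j).le (g i)) ∧
    (¬ ∃ g : ℕ → ReadingList M, ∀ i : ℕ,
        (g (i + 1)).le (g i) ∧ ¬ (g i).le (g (i + 1))) :=
  readingList_noetherian_general M
end

section
/- Let $f = \sum_{\sigma \in \Sigma_n} f_{\sigma(1)} \otimes \cdots \otimes f_{\sigma(n)}$ be a symmetric tensor in $(\bigwedge^d \mathbf{k}^{Md})^{\otimes n}$ and $h = h_1 \otimes \cdots \otimes h_n \in (\bigwedge^e \mathbf{k}^{Me})^{\otimes n}$. Define the internal product $(u_1 \otimes \cdots \otimes u_n) *_g (v_1 \otimes \cdots \otimes v_n) = (g u_1 \wedge g^c v_1) \otimes \cdots \otimes (g u_n \wedge g^c v_n)$, where $g: [Md] \hookrightarrow [M(d+e)]$ is strictly increasing with complement $g^c$. Then symmetrization commutes with the internal product: $\pi(f *_g h) = f *_g \pi(h)$, where $\pi$ is the symmetrization projection on $(\bigwedge^{d+e}\mathbf{k}^{M(d+e)})^{\otimes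 n}$. -/
open scoped TensorProduct


private theorem my_reindex_map₂ {k : Type*} [CommSemiring k] {n : ℕ}
    {A B C : Type*} [AddCommMonoid A] [Module k A] [AddCommMonoid B] [Module k B]
    [AddCommMonoid C] [Module k C] (b : A →ₗ[k] B →ₗ[k] C)
    (σ : Equiv.Perm (Fin n)) (x : ⨂[k] (_ : Fin n), A) (y : ⨂[k] (_ : Fin n), B) :
    PiTensorProduct.reindex k (fun _ : Fin n => C) σ
        (PiTensorProduct.map₂ (fun _ : Fin n => b) x y)
      = PiTensorProduct.map₂ (fun _ : Fin n => b)
          (PiTensorProduct.reindex k (fun _ : Fin n => A) σ x)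
          (PiTensorProduct.reindex k (fun _ : Fin n => B) σ y) := by
  induction x using PiTensorProduct.induction_on with
  | smul_tprod r u =>
    induction y using PiTensorProduct.induction_on with
    | smul_tprod s v =>
      simp [PiTensorProduct.map₂_tprod_tprod, PiTensorProduct.reindex_tprod,
        smul_smul, mul_comm]
    | add y₁ y₂ h₁ h₂ =>
      simp only [map_add, h₁, h₂]
  | add x₁ x₂ h₁ h₂ =>
    simp only [map_add, LinearMap.add_apply, h₁, h₂]

/-- Lemma 3.1(1): symmetrization commutes with the internal product `*_g`.  Here the
internal product of tensors of exterior-algebra elements is defined factorwise by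
`u *_g v = g(u) ∧ gᶜ(v)`, where `g : [Md] → [M(d+e)]` is strictly increasing, `gᶜ`
enumerates the complement of its image in increasing order, and both act on the exterior
algebras by relabelling the standard basis vectors.  For a `Σₙ`-invariant tensor `f`
(e.g. `f = ∑_{σ} f_{σ(1)} ⊗ ⋯ ⊗ f_{σ(n)}`) and any tensor `h`, one has
`π(f *_g h) = f *_g π(h)`, where `π` denotes the symmetrization projection. -/
theorem symmetrization_internal_product (k : Type*) [Field k] [CharZero k]
    (M d e n : ℕ)
    (g : Fin (M * d) → Fin (M * (d + e))) (hg : StrictMono g)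
    (gc : Fin (M * e) → Fin (M * (d + e))) (hgc : StrictMono gc)
    (hcompl : Set.range gc = (Set.range g)ᶜ) :
    let Λd := ExteriorAlgebra k (Fin (M * d) →₀ k)
    let Λe := ExteriorAlgebra k (Fin (M * e) →₀ k)
    let Λ := ExteriorAlgebra k (Fin (M * (d + e)) →₀ k)
    let Φg : Λd →ₐ[k] Λ := ExteriorAlgebra.map (Finsupp.lmapDomain k k g)
    let Φgc : Λe →ₐ[k] Λ := ExteriorAlgebra.map (Finsupp.lmapDomain k k gc)
    let b : Λd →ₗ[k] Λe →ₗ[k] Λ :=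
      (LinearMap.mul k Λ).compl₁₂ Φg.toLinearMap Φgc.toLinearMap
    let star : (⨂[k] (_ : Fin n), Λd) →ₗ[k]
        (⨂[k] (_ : Fin n), Λe) →ₗ[k] ⨂[k] (_ : Fin n), Λ :=
      PiTensorProduct.map₂ (fun _ : Fin n => b)
    let actd : Equiv.Perm (Fin n) → (⨂[k] (_ : Fin n), Λd) →ₗ[k] ⨂[k] (_ : Fin n), Λd :=
      fun σ => (PiTensorProduct.reindex k (fun _ : Fin n => Λd) σ).toLinearMap
    let acte : Equiv.Perm (Fin n) → (⨂[k] (_ : Fin n), Λe) →ₗ[k] ⨂[k] (_ : Fin n), Λe :=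
      fun σ => (PiTensorProduct.reindex k (fun _ : Fin n => Λe) σ).toLinearMap
    let actb : Equiv.Perm (Fin n) → (⨂[k] (_ : Fin n), Λ) →ₗ[k] ⨂[k] (_ : Fin n), Λ :=
      fun σ => (PiTensorProduct.reindex k (fun _ : Fin n => Λ) σ).toLinearMap
    let πe : (⨂[k] (_ : Fin n), Λe) →ₗ[k] ⨂[k] (_ : Fin n), Λe :=
      (n.factorial : k)⁻¹ • ∑ σ : Equiv.Perm (Fin n), acte σ
    let πb : (⨂[k] (_ : Fin n), Λ) →ₗ[k] ⨂[k] (_ : Fin n), Λ :=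
      (n.factorial : k)⁻¹ • ∑ σ : Equiv.Perm (Fin n), actb σ
    ∀ f : ⨂[k] (_ : Fin n), Λd, (∀ σ, actd σ f = f) →
      ∀ h : ⨂[k] (_ : Fin n), Λe, πb (star f h) = star f (πe h) := by
  intro Λd Λe Λ Φg Φgc b star actd acte actb πe πb f hf h
  have key : ∀ σ : Equiv.Perm (Fin n), actb σ (star f h) = star f (acte σ h) := by
    intro σ
    have H := my_reindex_map₂ b σ f h
    have hfd : (PiTensorProduct.reindex k (fun _ : Fin n => Λd) σ) f = f := hf σ
    rw [hfd] at H
    exact H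
  simp only [πb, πe, LinearMap.smul_apply, LinearMap.sum_apply, map_smul, map_sum, key]
end
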